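/- Let u₁ ∈ C³[0,1] satisfy u₁(0) = u₁'(0) = u₁''(0) = 0 and let u₂ ∈ C³[0,1] satisfy u₂(0) = 0. Define v₁(ρ) := −ρ u₁'(ρ) + u₁(ρ) + ρ u₂'(ρ) − u₂(ρ) for ρ ∈ [0,1], and v₂(ρ) := u₁'(ρ)/ρ − ρ u₂'(ρ) for ρ ∈ (0,1] with v₂(0) := 0. Then v₁ ∈ C²[0,1] with v₁(0) = v₁'(0) = 0, and v₂ ∈ C¹[0,1] with v₂(0) = 0; in particular v₂ is continuously differentiable at ρ = 0 with v₂'(0) = u₁'''(0)/2 − u₂'(0). -/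

import Mathlib

/-!
Only `v₂` needs an argument. For `f = u₁'`, which is `C²` with `f(0) = f'(0) = 0`, Taylor's
theorem gives `f(ρ)/ρ² → f''(0)/2` as `ρ → 0⁺`. This limit is the derivative at `0` of
`g(ρ) = f(ρ)/ρ`, and also, since `f'(ρ)/ρ → f''(0)`, the limit of
`g'(ρ) = f'(ρ)/ρ - f(ρ)/ρ²`; hence `g` is `C¹` on `[0,1]`.
-/

open Set Filter Topology

noncomputable def dI (f : ℝ → ℂ) (ρ : ℝ) : ℂ := derivWithin f (Set.Icc 0 1) ρ

section

variable {E : Type*} [NormedAddCommGroup E] [NormedSpace ℝ E] {f : ℝ → E} {s : Set ℝ}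

theorem tendsto_inv_smul_of_hasDerivWithinAt {f' : E} (hf : HasDerivWithinAt f f' s 0)
    (h0 : f 0 = 0) : Tendsto (fun x => x⁻¹ • f x) (𝓝[s \ {0}] 0) (𝓝 f') :=
  (hasDerivWithinAt_iff_tendsto_slope.1 hf).congr fun x => by simp [slope_def_module, h0]

theorem tendsto_inv_sq_smul_of_contDiffOn (hs : Convex ℝ s) (h0s : 0 ∈ s)
    (hf : ContDiffOn ℝ 2 f s) (h0 : f 0 = 0) (h1 : derivWithin f s 0 = 0) :
    Tendsto (fun x => (x ^ 2)⁻¹ • f x) (𝓝[s \ {0}] 0)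
      (𝓝 ((2 : ℝ)⁻¹ • derivWithin (derivWithin f s) s 0)) := by
  set c := (2 : ℝ)⁻¹ • derivWithin (derivWithin f s) s 0
  have taylor := ((taylor_tendsto hs h0s (n := 2) hf).add_const c).mono_left
    (nhdsWithin_mono 0 (sdiff_subset (t := {0})))
  rw [zero_add] at taylor
  refine taylor.congr' ?_
  filter_upwards [self_mem_nhdsWithin] with x hx
  have hcoef : (x ^ 2)⁻¹ * ((1 + 1)⁻¹ * x ^ 2) = (2 : ℝ)⁻¹ := by
    field_simp [show x ≠ 0 from hx.2]
    norm_num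
  simp [c, taylor_within_apply, iteratedDerivWithin_succ, h0, h1, smul_sub, smul_smul, hcoef]

-- Since `0⁻¹ = 0` the function vanishes at `0`, so its slope at `0` is `(x ^ 2)⁻¹ • f x`.
theorem hasDerivWithinAt_inv_smul_zero (hs : Convex ℝ s) (h0s : 0 ∈ s)
    (hf : ContDiffOn ℝ 2 f s) (h0 : f 0 = 0) (h1 : derivWithin f s 0 = 0) :
    HasDerivWithinAt (fun x => x⁻¹ • f x) ((2 : ℝ)⁻¹ • derivWithin (derivWithin f s) s 0) s 0 :=
  hasDerivWithinAt_iff_tendsto_slope.2 <| (tendsto_inv_sq_smul_of_contDiffOn hs h0s hf h0 h1).congr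
    fun x => by simp [slope_def_module, smul_smul, sq]

theorem HasDerivWithinAt.inv_smul {f' : E} {x : ℝ} (hf : HasDerivWithinAt f f' s x) (hx : x ≠ 0) :
    HasDerivWithinAt (fun y => y⁻¹ • f y) (x⁻¹ • f' - (x ^ 2)⁻¹ • f x) s x := by
  convert (hasDerivAt_inv hx).hasDerivWithinAt.fun_smul hf using 1
  rw [neg_smul, sub_eq_neg_add, add_comm]

theorem contDiffOn_inv_smul (hs : Convex ℝ s) (hs' : UniqueDiffOn ℝ s) (h0s : 0 ∈ s)
    (hf : ContDiffOn ℝ 2 f s) (h0 : f 0 = 0) (h1 : derivWithin f s 0 = 0) :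
    ContDiffOn ℝ 1 (fun x => x⁻¹ • f x) s := by
  have hf' : ContDiffOn ℝ 1 (derivWithin f s) s := hf.derivWithin hs' (by norm_num)
  have hderiv : ∀ x ∈ s, x ≠ 0 → HasDerivWithinAt (fun y => y⁻¹ • f y)
      (x⁻¹ • derivWithin f s x - (x ^ 2)⁻¹ • f x) s x := fun x hx hx0 =>
    ((hf.differentiableOn two_ne_zero x hx).hasDerivWithinAt).inv_smul hx0
  have hderiv0 := hasDerivWithinAt_inv_smul_zero hs h0s hf h0 h1
  rw [show (1 : WithTop ℕ∞) = 0 + 1 from rfl, contDiffOn_succ_iff_derivWithin hs']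
  refine ⟨fun x hx => ?_, by simp, contDiffOn_zero.2 fun x hx => ?_⟩
  · rcases eq_or_ne x 0 with rfl | hx0
    · exact hderiv0.differentiableWithinAt
    · exact (hderiv x hx hx0).differentiableWithinAt
  · rcases eq_or_ne x 0 with rfl | hx0
    · rw [← continuousWithinAt_sdiff_self, ContinuousWithinAt, hderiv0.derivWithin (hs' 0 h0s)]
      have hf'0 : HasDerivWithinAt (derivWithin f s) (derivWithin (derivWithin f s) s 0) s 0 :=
        (hf'.differentiableOn one_ne_zero 0 h0s).hasDerivWithinAt
      have hlim := (tendsto_inv_smul_of_hasDerivWithinAt hf'0 h1).sub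
        (tendsto_inv_sq_smul_of_contDiffOn hs h0s hf h0 h1)
      rw [show ∀ v : E, v - (2 : ℝ)⁻¹ • v = (2 : ℝ)⁻¹ • v from fun v => by module] at hlim
      refine hlim.congr' ?_
      filter_upwards [self_mem_nhdsWithin] with y hy
      exact ((hderiv y hy.1 hy.2).derivWithin (hs' y hy.1)).symm
    · have hcont : ContinuousWithinAt (fun y => y⁻¹ • derivWithin f s y - (y ^ 2)⁻¹ • f y) s x :=
        ((continuousAt_inv₀ hx0).continuousWithinAt.smul (hf'.continuousOn x hx)).sub
          (((continuousAt_id.pow 2).inv₀ (pow_ne_zero 2 hx0)).continuousWithinAt.smul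
            (hf.continuousOn x hx))
      refine hcont.congr_of_eventuallyEq ?_ ((hderiv x hx hx0).derivWithin (hs' x hx))
      filter_upwards [self_mem_nhdsWithin, nhdsWithin_le_nhds (eventually_ne_nhds hx0)]
        with y hy hy0
      exact (hderiv y hy hy0).derivWithin (hs' y hy)

end

theorem stmt_7 (u₁ u₂ : ℝ → ℂ)
    (h1 : ContDiffOn ℝ 3 u₁ (Set.Icc 0 1))
    (h10 : u₁ 0 = 0) (h11 : dI u₁ 0 = 0) (h12 : dI (dI u₁) 0 = 0)
    (h2 : ContDiffOn ℝ 3 u₂ (Set.Icc 0 1)) (h20 : u₂ 0 = 0) :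
    ContDiffOn ℝ 2 (fun ρ : ℝ => -(ρ:ℂ) * dI u₁ ρ + u₁ ρ + (ρ:ℂ) * dI u₂ ρ - u₂ ρ)
      (Set.Icc 0 1) ∧
    (-(0:ℂ) * dI u₁ 0 + u₁ 0 + (0:ℂ) * dI u₂ 0 - u₂ 0) = 0 ∧
    dI (fun ρ : ℝ => -(ρ:ℂ) * dI u₁ ρ + u₁ ρ + (ρ:ℂ) * dI u₂ ρ - u₂ ρ) 0 = 0 ∧
    ContDiffOn ℝ 1 (fun ρ : ℝ => dI u₁ ρ / (ρ:ℂ) - (ρ:ℂ) * dI u₂ ρ) (Set.Icc 0 1) ∧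
    (dI u₁ 0 / (0:ℂ) - (0:ℂ) * dI u₂ 0) = 0 ∧
    dI (fun ρ : ℝ => dI u₁ ρ / (ρ:ℂ) - (ρ:ℂ) * dI u₂ ρ) 0
      = dI (dI (dI u₁)) 0 / 2 - dI u₂ 0 := by
  set I := Icc (0 : ℝ) 1
  have hI : UniqueDiffOn ℝ I := uniqueDiffOn_Icc one_pos
  have h0I : (0 : ℝ) ∈ I := left_mem_Icc.2 zero_le_one
  have hasDeriv : ∀ {n : WithTop ℕ∞} {φ : ℝ → ℂ}, ContDiffOn ℝ n φ I → n ≠ 0 →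
      HasDerivWithinAt φ (dI φ 0) I 0 := fun hφ hn =>
    (hφ.differentiableOn hn 0 h0I).hasDerivWithinAt
  have hofReal : ∀ n : WithTop ℕ∞, ContDiffOn ℝ n (fun ρ : ℝ => (ρ : ℂ)) I :=
    fun _ => Complex.ofRealCLM.contDiff.contDiffOn
  have hofReal' : HasDerivWithinAt (fun ρ : ℝ => (ρ : ℂ)) 1 I 0 :=
    Complex.ofRealCLM.hasDerivAt.hasDerivWithinAt
  have hd1 : ContDiffOn ℝ 2 (dI u₁) I := h1.derivWithin hI (by norm_num)
  have hd2 : ContDiffOn ℝ 2 (dI u₂) I := h2.derivWithin hI (by norm_num)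
  have hdiv : (fun ρ : ℝ => dI u₁ ρ / (ρ : ℂ)) = fun ρ : ℝ => ρ⁻¹ • dI u₁ ρ := by
    ext ρ
    simp [Complex.real_smul, div_eq_inv_mul]
  have hv₁' := (((hofReal'.neg.mul (hasDeriv hd1 two_ne_zero)).add (hasDeriv h1 three_ne_zero)).add
    (hofReal'.mul (hasDeriv hd2 two_ne_zero))).sub (hasDeriv h2 three_ne_zero)
  have hv₂' := (hdiv ▸ hasDerivWithinAt_inv_smul_zero (convex_Icc 0 1) h0I hd1 h11 h12).sub
    (hofReal'.mul (hasDeriv hd2 two_ne_zero))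
  refine ⟨((((hofReal 2).neg.mul hd1).add (h1.of_le (by norm_num))).add
      ((hofReal 2).mul hd2)).sub (h2.of_le (by norm_num)), by simp [h10, h20],
    (hv₁'.derivWithin (hI 0 h0I)).trans (by simp),
    (hdiv ▸ contDiffOn_inv_smul (convex_Icc 0 1) hI h0I hd1 h11 h12).sub
      ((hofReal 1).mul (hd2.of_le (by norm_num))), by simp,
    (hv₂'.derivWithin (hI 0 h0I)).trans ?_⟩
  simp only [Complex.real_smul, Complex.ofReal_inv, Complex.ofReal_ofNat, Complex.ofReal_zero,
    one_mul, zero_mul, add_zero, div_eq_inv_mul]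
  rfl
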